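/- arXiv:2303.12373 — 4 statements merged into one kernel-verified Lean document; each statement's English description precedes it below -/
import Mathlib

section
/- Let a, b, c, d be formal power series over ℂ with b(0) = 0 and d(0) = 0, and let A and C be the Riordan matrices of the pairs (a,b) and (c,d), i.e. A_{n,k} = [[x^n]] a(x)·b(x)^k and C_{k,i} = [[x^k]] c(x)·d(x)^i. Then for all n ≥ i ≥ 0, the product matrix has entries ∑_{k=i}^{n} A_{n,k} C_{k,i} = [[x^n]] a(x)·c(b(x))·(d(b(x)))^i, where c(b(x)) and d(b(x)) denote formal substitution of b (which is well defined since b(0)=0). In other words, the product of the Riordan matrices (a,b) and (c,d) is the Riordan matrix (a(x)·c(b(x)), d(b(x))). -/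
open Finset PowerSeries

/-- Formal substitution of a power series `h` (with zero constant term) into `p`:
the `n`-th coefficient of `p(h(x))` is `∑_{k=0}^{n} p_k · [[x^n]] h^k`. -/
noncomputable def PowerSeries.scomp (p h : PowerSeries ℂ) : PowerSeries ℂ :=
  PowerSeries.mk fun n => ∑ k ∈ Finset.range (n + 1),
    (PowerSeries.coeff k p) * (PowerSeries.coeff n (h ^ k))

/-! Since `b ^ k` is divisible by `X ^ k`, truncating the sum at `k = n` loses nothing, so `scomp`
agrees with Mathlib's `PowerSeries.subst` and substitution of `b` is multiplicative:
`(c d^i)(b) = c(b) d(b)^i`. The same divisibility gives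
`[x^n] a·e(b) = ∑_{k ≤ n} [x^n] (a b^k) · e_k`, and for `e = c d^i` the terms with `k < i`
vanish because `X ^ i ∣ c d^i`. -/

namespace PowerSeries

theorem coeff_mul_pow_of_lt {R : Type*} [CommSemiring R] (c : R⟦X⟧) {d : R⟦X⟧}
    (hd : constantCoeff d = 0) {m i : ℕ} (h : m < i) : coeff m (c * d ^ i) = 0 :=
  X_pow_dvd_iff.mp (dvd_mul_of_dvd_right (pow_dvd_pow_of_dvd (X_dvd_iff.mpr hd) i) c) m h

theorem coeff_pow_of_lt {R : Type*} [CommSemiring R] {d : R⟦X⟧}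
    (hd : constantCoeff d = 0) {m i : ℕ} (h : m < i) : coeff m (d ^ i) = 0 := by
  simpa using coeff_mul_pow_of_lt 1 hd h

variable {b : ℂ⟦X⟧}

theorem coeff_scomp (p : ℂ⟦X⟧) (n : ℕ) :
    coeff n (scomp p b) = ∑ k ∈ range (n + 1), coeff k p * coeff n (b ^ k) :=
  coeff_mk _ _

theorem coeff_scomp_of_le (hb : constantCoeff b = 0) (p : ℂ⟦X⟧) {m n : ℕ} (hmn : m ≤ n) :
    coeff m (scomp p b) = ∑ k ∈ range (n + 1), coeff k p * coeff m (b ^ k) := by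
  rw [coeff_scomp]
  refine sum_subset (range_subset_range.mpr (by omega)) fun k _ hkm => ?_
  rw [coeff_pow_of_lt hb (by simp only [mem_range, not_lt] at hkm; omega), mul_zero]

theorem scomp_eq_subst (hb : constantCoeff b = 0) (p : ℂ⟦X⟧) : scomp p b = p.subst b := by
  ext n
  rw [coeff_scomp, coeff_subst' (HasSubst.of_constantCoeff_zero' hb)]
  refine (finsum_eq_sum_of_support_subset _ fun k hk => ?_).symm
  by_contra hkn
  simp only [coe_range, Set.mem_Iio, not_lt] at hkn
  exact hk (by simp only; rw [coeff_pow_of_lt hb (by omega), mul_zero])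

theorem scomp_mul (hb : constantCoeff b = 0) (p q : ℂ⟦X⟧) :
    scomp (p * q) b = scomp p b * scomp q b := by
  simp only [scomp_eq_subst hb, subst_mul (HasSubst.of_constantCoeff_zero' hb)]

theorem scomp_pow (hb : constantCoeff b = 0) (p : ℂ⟦X⟧) (i : ℕ) :
    scomp (p ^ i) b = scomp p b ^ i := by
  simp only [scomp_eq_subst hb, subst_pow (HasSubst.of_constantCoeff_zero' hb)]

theorem coeff_mul_scomp (hb : constantCoeff b = 0) (a e : ℂ⟦X⟧) (n : ℕ) :
    coeff n (a * scomp e b) = ∑ k ∈ range (n + 1), coeff n (a * b ^ k) * coeff k e := by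
  have htrunc : ∀ m ≤ n,
      coeff m (scomp e b) = coeff m (∑ k ∈ range (n + 1), C (coeff k e) * b ^ k) := by
    intro m hm
    simp only [coeff_scomp_of_le hb e hm, map_sum, coeff_C_mul]
  calc coeff n (a * scomp e b)
      = coeff n (a * ∑ k ∈ range (n + 1), C (coeff k e) * b ^ k) := by
        simp only [coeff_mul]
        exact sum_congr rfl fun uv huv => by
          rw [htrunc uv.2 (HasAntidiagonal.antidiagonal.snd_le huv)]
    _ = _ := by
        simp only [mul_sum, map_sum, mul_left_comm a, coeff_C_mul, mul_comm (coeff _ e)]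

end PowerSeries

theorem riordan_mul_general (a b c d : PowerSeries ℂ)
    (hb : PowerSeries.constantCoeff b = 0)
    (hd : PowerSeries.constantCoeff d = 0)
    (n i : ℕ) :
    ∑ k ∈ Finset.Icc i n,
        (PowerSeries.coeff n (a * b ^ k)) * (PowerSeries.coeff k (c * d ^ i)) =
      PowerSeries.coeff n (a * (PowerSeries.scomp c b) * (PowerSeries.scomp d b) ^ i) := by
  rw [mul_assoc, ← scomp_pow hb, ← scomp_mul hb, coeff_mul_scomp hb]
  refine sum_subset (fun k hk => by simp only [mem_Icc, mem_range] at hk ⊢; omega)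
    fun k hk hki => ?_
  simp only [mem_Icc, mem_range] at hk hki
  rw [coeff_mul_pow_of_lt c hd (by omega), mul_zero]

/-- The product of the Riordan matrices `(a,b)` and `(c,d)` is the Riordan matrix
`(a(x)·c(b(x)), d(b(x)))`. -/
theorem riordan_mul (a b c d : PowerSeries ℂ)
    (hb : PowerSeries.constantCoeff b = 0)
    (hd : PowerSeries.constantCoeff d = 0)
    (n i : ℕ) (hni : i ≤ n) :
    ∑ k ∈ Finset.Icc i n,
        (PowerSeries.coeff n (a * b ^ k)) * (PowerSeries.coeff k (c * d ^ i)) =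
      PowerSeries.coeff n (a * (PowerSeries.scomp c b) * (PowerSeries.scomp d b) ^ i) :=
  riordan_mul_general a b c d hb hd n i
end

section
/- For every integer k ≥ 0, the following identity of polynomials (in ℚ[x]) holds: 2^k · B_k(x) = ∑_{n=0}^{k} C(k,n) · B_n(x) · E_{k−n}(x), where B_n(x) is the n-th Bernoulli polynomial and E_n(x) is the n-th Euler polynomial. Equivalently, 2^k B_k(x)/k! = ∑_{n=0}^{k} (B_n(x)/n!)·(E_{k−n}(x)/(k−n)!). -/
/-!
With `B(t) = t e^{xt} / (e^t - 1)` and `E(t) = 2 e^{xt} / (e^t + 1)` the exponential generating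
functions of the Bernoulli and Euler polynomials, `B(t) E(t) = 2t e^{2xt} / (e^{2t} - 1) = B(2t)`;
comparing coefficients of `t^k / k!` gives the identity. In `ℚ[x]⟦t⟧` the divisions are avoided
by multiplying through by `e^{2t} - 1 = (e^t - 1)(e^t + 1)`, which is cancellable since
`ℚ[x]⟦t⟧` is a domain.
-/

open Finset

/-- The `n`-th Euler polynomial, i.e. the unique sequence of polynomials in `ℚ[X]`
satisfying `E_n(x) + ∑_{k=0}^{n} C(n,k) E_k(x) = 2x^n`, so that
`E_n = x^n - (1/2) ∑_{k<n} C(n,k) E_k`. -/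
noncomputable def eulerPoly : ℕ → Polynomial ℚ
  | n => Polynomial.X ^ n - Polynomial.C (1/2 : ℚ) *
      ∑ k : Fin n, Polynomial.C (n.choose k : ℚ) * eulerPoly k

open Nat PowerSeries

namespace PowerSeries

variable {A : Type*} [CommRing A] [Algebra ℚ A]

noncomputable def egf (a : ℕ → A) : A⟦X⟧ :=
  mk fun n => (n ! : ℚ)⁻¹ • a n

@[simp]
theorem coeff_egf (a : ℕ → A) (n : ℕ) : coeff n (egf a) = (n ! : ℚ)⁻¹ • a n :=
  coeff_mk _ _

theorem egf_injective : Function.Injective (egf (A := A)) := by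
  intro a b h
  funext n
  have hn := congrArg (coeff n) h
  rwa [coeff_egf, coeff_egf, smul_right_inj (inv_ne_zero (cast_ne_zero.2 n.factorial_ne_zero))]
    at hn

theorem egf_add (a b : ℕ → A) : egf (a + b) = egf a + egf b := by
  ext n
  simp [smul_add]

theorem egf_const_mul (c : A) (a : ℕ → A) : egf (fun n => c * a n) = C c * egf a := by
  ext n
  simp

theorem rescale_egf (c : A) (a : ℕ → A) : rescale c (egf a) = egf fun n => c ^ n * a n := by
  ext n
  simp

theorem exp_eq_egf_one : exp A = egf 1 := by
  ext n
  simp [coeff_exp, Algebra.smul_def]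

theorem rescale_exp (t : A) : rescale t (exp A) = egf fun n => t ^ n := by
  simp [exp_eq_egf_one, rescale_egf]

theorem egf_mul_egf (a b : ℕ → A) :
    egf a * egf b =
      egf fun n => ∑ k ∈ range (n + 1), (n.choose k : A) * a k * b (n - k) := by
  ext n
  rw [coeff_mul, Nat.sum_antidiagonal_eq_sum_range_succ_mk, coeff_egf, smul_sum]
  refine sum_congr rfl fun k hk => ?_
  have hkn : k ≤ n := mem_range_succ_iff.1 hk
  have hfac : ((k ! : ℚ)⁻¹ * ((n - k)! : ℚ)⁻¹) = (n ! : ℚ)⁻¹ * n.choose k := by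
    rw [Nat.cast_choose ℚ hkn]
    field_simp
  rw [coeff_egf, coeff_egf, smul_mul_smul_comm, hfac, mul_smul, Nat.cast_smul_eq_nsmul,
    nsmul_eq_mul, mul_assoc]

theorem rescale_two_exp : rescale (2 : A) (exp A) = exp A * exp A := by
  rw [← one_add_one_eq_two, ← exp_mul_exp_eq_exp_add, rescale_one, RingHom.id_apply]

end PowerSeries

theorem eulerPoly_add_sum_range_choose_mul (n : ℕ) :
    eulerPoly n + ∑ k ∈ range (n + 1), (n.choose k : Polynomial ℚ) * eulerPoly k =
      2 * Polynomial.X ^ n := by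
  have hdef : eulerPoly n = Polynomial.X ^ n - Polynomial.C (1 / 2 : ℚ) *
      ∑ k ∈ range n, (n.choose k : Polynomial ℚ) * eulerPoly k := by
    rw [eulerPoly, Fin.sum_univ_eq_sum_range (fun k => Polynomial.C (n.choose k : ℚ) * eulerPoly k)]
    simp only [map_natCast]
  have hhalf : Polynomial.C (1 / 2 : ℚ) * 2 = 1 := by
    rw [← map_ofNat Polynomial.C 2, ← Polynomial.C_mul]; norm_num
  rw [sum_range_succ, choose_self, cast_one, one_mul]
  linear_combination 2 * hdef - (∑ k ∈ range n, (n.choose k : Polynomial ℚ) * eulerPoly k) * hhalf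

theorem egf_eulerPoly_mul_exp_add_one :
    egf eulerPoly * (exp (Polynomial ℚ) + 1) = 2 * rescale Polynomial.X (exp (Polynomial ℚ)) := by
  rw [rescale_exp, mul_add, mul_one, exp_eq_egf_one, egf_mul_egf, ← egf_add,
    ← map_ofNat (C (R := Polynomial ℚ)) 2, ← egf_const_mul]
  congr 1
  funext n
  simp only [Pi.add_apply, Pi.one_apply, mul_one]
  rw [add_comm, eulerPoly_add_sum_range_choose_mul]

theorem egf_bernoulli_mul_exp_sub_one :
    egf Polynomial.bernoulli * (exp (Polynomial ℚ) - 1) =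
      X * rescale Polynomial.X (exp (Polynomial ℚ)) := by
  rw [← Polynomial.bernoulli_generating_function]
  congr 1
  ext n
  simp

theorem egf_bernoulli_mul_egf_eulerPoly :
    egf Polynomial.bernoulli * egf eulerPoly = rescale 2 (egf Polynomial.bernoulli) := by
  set e := exp (Polynomial ℚ)
  set T := rescale Polynomial.X e
  have hT : rescale 2 T = T * T := by
    rw [rescale_rescale, exp_mul_exp_eq_exp_add, mul_two]
  have hsq : rescale 2 e - 1 = (e - 1) * (e + 1) := by
    rw [rescale_two_exp]; ring
  have hne : rescale 2 e - 1 ≠ 0 := fun h => by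
    simpa [e, coeff_rescale, coeff_exp] using congrArg (coeff 1) h
  apply mul_right_cancel₀ hne
  calc egf Polynomial.bernoulli * egf eulerPoly * (rescale 2 e - 1)
      = (egf Polynomial.bernoulli * (e - 1)) * (egf eulerPoly * (e + 1)) := by rw [hsq]; ring
    _ = X * T * (2 * T) := by rw [egf_bernoulli_mul_exp_sub_one, egf_eulerPoly_mul_exp_add_one]
    _ = rescale 2 (egf Polynomial.bernoulli * (e - 1)) := by
      rw [egf_bernoulli_mul_exp_sub_one, map_mul, rescale_X, hT, map_ofNat]; ring
    _ = rescale 2 (egf Polynomial.bernoulli) * (rescale 2 e - 1) := by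
      rw [map_mul, map_sub, map_one]

/-- `2^k B_k(x) = ∑_{n=0}^{k} C(k,n) B_n(x) E_{k-n}(x)` in `ℚ[X]`. -/
theorem two_pow_bernoulli_eq_sum (k : ℕ) :
    Polynomial.C ((2 : ℚ) ^ k) * Polynomial.bernoulli k =
      ∑ n ∈ Finset.range (k + 1),
        Polynomial.C (k.choose n : ℚ) * Polynomial.bernoulli n * eulerPoly (k - n) := by
  have h := egf_bernoulli_mul_egf_eulerPoly
  rw [egf_mul_egf, rescale_egf] at h
  simpa only [map_pow, map_ofNat, map_natCast] using (congrFun (egf_injective h) k).symm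
end

section
/- Let q, y, x ∈ ℂ with |q| < 1 and |y| < 1. Then the series ∑_{j=0}^{∞} (y^j / (q;q)_j) · (x;q)_j converges and its sum equals (yx;q)_∞ / (y;q)_∞, i.e. the ratio of the convergent infinite products ∏_{i=0}^{∞}(1 − yx·q^i) and ∏_{i=0}^{∞}(1 − y·q^i) (the denominator being nonzero since |y·q^i| < 1 for all i). -/
open Finset

/-- The finite q-Pochhammer symbol `(a;q)_n = ∏_{i=0}^{n-1} (1 - a q^i)`. -/
noncomputable def qPoch (a q : ℂ) (n : ℕ) : ℂ := ∏ i ∈ Finset.range n, (1 - a * q ^ i)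

/-!
Write `F(z) = ∑_j z^j (x;q)_j / (q;q)_j`. The coefficients `c_j = (x;q)_j / (q;q)_j` satisfy
`c_{j+1} (1 - q^{j+1}) = c_j (1 - x q^j)`, which is exactly the coefficientwise form of the
functional equation `(1 - z) F(z) = (1 - x z) F(q z)`. Iterating it `n` times gives
`F(y) (y;q)_n = F(q^n y) (xy;q)_n`, and letting `n → ∞` (where `F(q^n y) → F(0) = 1`) gives
`F(y) (y;q)_∞ = (xy;q)_∞`. The coefficients are bounded since they converge to
`(x;q)_∞ / (q;q)_∞`, so every series involved is dominated by a geometric one.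
-/

open Filter Topology

theorem qPoch_zero (a q : ℂ) : qPoch a q 0 = 1 := prod_range_zero _

theorem qPoch_succ (a q : ℂ) (n : ℕ) : qPoch a q (n + 1) = qPoch a q n * (1 - a * q ^ n) :=
  prod_range_succ _ _

section QPochhammer

variable {a q : ℂ}

theorem norm_pow_mul_lt_one (hq : ‖q‖ ≤ 1) (ha : ‖a‖ < 1) (n : ℕ) : ‖q ^ n * a‖ < 1 := by
  rw [norm_mul, norm_pow]
  exact (mul_le_of_le_one_left (norm_nonneg a) (pow_le_one₀ (norm_nonneg q) hq)).trans_lt ha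

theorem one_sub_mul_pow_ne_zero (ha : ‖a‖ < 1) (hq : ‖q‖ ≤ 1) (i : ℕ) :
    1 - a * q ^ i ≠ 0 := by
  rw [sub_ne_zero, mul_comm]
  intro h
  simpa [← h] using norm_pow_mul_lt_one hq ha i

theorem summable_norm_neg_mul_pow (a : ℂ) (hq : ‖q‖ < 1) :
    Summable fun i : ℕ => ‖-(a * q ^ i)‖ := by
  simpa [norm_mul, norm_pow] using
    (summable_geometric_of_lt_one (norm_nonneg q) hq).mul_left ‖a‖

theorem multipliable_one_sub_mul_pow (a : ℂ) (hq : ‖q‖ < 1) :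
    Multipliable fun i : ℕ => 1 - a * q ^ i := by
  simpa [sub_eq_add_neg] using multipliable_one_add_of_summable (summable_norm_neg_mul_pow a hq)

theorem tprod_one_sub_mul_pow_ne_zero (hq : ‖q‖ < 1) (h : ∀ i : ℕ, 1 - a * q ^ i ≠ 0) :
    ∏' i : ℕ, (1 - a * q ^ i) ≠ 0 := by
  simpa [sub_eq_add_neg] using
    tprod_one_add_ne_zero_of_summable (by simpa [sub_eq_add_neg] using h)
      (summable_norm_neg_mul_pow a hq)

theorem tendsto_qPoch (a : ℂ) (hq : ‖q‖ < 1) :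
    Tendsto (qPoch a q) atTop (𝓝 (∏' i : ℕ, (1 - a * q ^ i))) :=
  (multipliable_one_sub_mul_pow a hq).hasProd.tendsto_prod_nat

end QPochhammer

section QBinomialSeries

variable {x q z : ℂ}

noncomputable def qBinomialSeriesCoeff (x q : ℂ) (j : ℕ) : ℂ := qPoch x q j / qPoch q q j

noncomputable def qBinomialSeries (x q z : ℂ) : ℂ :=
  ∑' j : ℕ, z ^ j * qBinomialSeriesCoeff x q j

theorem qBinomialSeriesCoeff_zero (x q : ℂ) : qBinomialSeriesCoeff x q 0 = 1 := by
  simp [qBinomialSeriesCoeff, qPoch_zero]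

theorem qBinomialSeriesCoeff_succ (hq : ‖q‖ < 1) (n : ℕ) :
    qBinomialSeriesCoeff x q (n + 1) * (1 - q * q ^ n) =
      qBinomialSeriesCoeff x q n * (1 - x * q ^ n) := by
  simp only [qBinomialSeriesCoeff, qPoch_succ]
  rw [div_mul_eq_mul_div, mul_div_mul_right _ _ (one_sub_mul_pow_ne_zero hq hq.le n),
    div_mul_eq_mul_div]

theorem exists_norm_qBinomialSeriesCoeff_le (x : ℂ) (hq : ‖q‖ < 1) :
    ∃ C, ∀ j, ‖qBinomialSeriesCoeff x q j‖ ≤ C := by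
  have hlim : Tendsto (qBinomialSeriesCoeff x q) atTop
      (𝓝 ((∏' i : ℕ, (1 - x * q ^ i)) / ∏' i : ℕ, (1 - q * q ^ i))) :=
    (tendsto_qPoch x hq).div (tendsto_qPoch q hq)
      (tprod_one_sub_mul_pow_ne_zero hq (one_sub_mul_pow_ne_zero hq hq.le))
  obtain ⟨C, hC⟩ := isBounded_iff_forall_norm_le.1 (Metric.isBounded_range_of_tendsto _ hlim)
  exact ⟨C, fun j => hC _ (Set.mem_range_self j)⟩

theorem summable_qBinomialSeries (x : ℂ) (hq : ‖q‖ < 1) (hz : ‖z‖ < 1) :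
    Summable fun j : ℕ => z ^ j * qBinomialSeriesCoeff x q j := by
  obtain ⟨C, hC⟩ := exists_norm_qBinomialSeriesCoeff_le x hq
  refine ((summable_geometric_of_lt_one (norm_nonneg z) hz).mul_right C).of_norm_bounded fun j => ?_
  rw [norm_mul, norm_pow]
  exact mul_le_mul_of_nonneg_left (hC j) (by positivity)

theorem qBinomialSeries_zero (x q : ℂ) : qBinomialSeries x q 0 = 1 := by
  rw [qBinomialSeries, tsum_eq_single 0 fun j hj => by simp [hj]]
  simp [qBinomialSeriesCoeff_zero]

theorem one_sub_mul_qBinomialSeries (hq : ‖q‖ < 1) (hz : ‖z‖ < 1) :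
    (1 - z) * qBinomialSeries x q z = (1 - x * z) * qBinomialSeries x q (q * z) := by
  have hqz : ‖q * z‖ < 1 := by simpa using norm_pow_mul_lt_one hq.le hz 1
  set c := qBinomialSeriesCoeff x q
  have hS : HasSum (fun j => z ^ j * c j) (qBinomialSeries x q z) :=
    (summable_qBinomialSeries x hq hz).hasSum
  have hT : HasSum (fun j => (q * z) ^ j * c j) (qBinomialSeries x q (q * z)) :=
    (summable_qBinomialSeries x hq hqz).hasSum
  have hdiff := (hasSum_nat_add_iff' 1).2 (hS.sub hT)
  simp only [range_one, sum_singleton, pow_zero, sub_self, sub_zero] at hdiff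
  have hterm : ∀ n : ℕ, z ^ (n + 1) * c (n + 1) - (q * z) ^ (n + 1) * c (n + 1) =
      z * (z ^ n * c n) - x * z * ((q * z) ^ n * c n) := by
    intro n
    linear_combination z ^ (n + 1) * qBinomialSeriesCoeff_succ (x := x) hq n
  rw [funext hterm] at hdiff
  linear_combination hdiff.unique ((hS.mul_left z).sub (hT.mul_left (x * z)))

theorem qBinomialSeries_mul_qPoch (hq : ‖q‖ < 1) (hz : ‖z‖ < 1) (n : ℕ) :
    qBinomialSeries x q z * qPoch z q n = qBinomialSeries x q (q ^ n * z) * qPoch (z * x) q n := by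
  induction n with
  | zero => simp [qPoch_zero]
  | succ n ih =>
    have hstep := one_sub_mul_qBinomialSeries (x := x) hq (norm_pow_mul_lt_one hq.le hz n)
    rw [qPoch_succ, qPoch_succ, pow_succ', mul_assoc]
    linear_combination (1 - z * q ^ n) * ih + qPoch (z * x) q n * hstep

theorem tendsto_qBinomialSeries_pow_mul (x : ℂ) (hq : ‖q‖ < 1) (hz : ‖z‖ < 1) :
    Tendsto (fun n : ℕ => qBinomialSeries x q (q ^ n * z)) atTop (𝓝 1) := by
  obtain ⟨C, hC⟩ := exists_norm_qBinomialSeriesCoeff_le x hq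
  rw [← qBinomialSeries_zero x q]
  refine tendsto_tsum_of_dominated_convergence (bound := fun j => ‖z‖ ^ j * C)
    ((summable_geometric_of_lt_one (norm_nonneg z) hz).mul_right C) (fun j => ?_) ?_
  · have hlim : Tendsto (fun n : ℕ => q ^ n * z) atTop (𝓝 0) := by
      simpa using (tendsto_pow_atTop_nhds_zero_of_norm_lt_one hq).mul_const z
    exact (hlim.pow j).mul_const _
  · refine Eventually.of_forall fun n j => ?_
    rw [norm_mul, norm_pow, norm_mul, norm_pow, mul_pow]
    exact mul_le_mul (mul_le_of_le_one_left (by positivity)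
      (pow_le_one₀ (by positivity) (pow_le_one₀ (norm_nonneg q) hq.le))) (hC j)
      (norm_nonneg _) (by positivity)

end QBinomialSeries

/-- For `|q| < 1`, `|y| < 1`, the series `∑_j (y^j/(q;q)_j)(x;q)_j` converges to
`(yx;q)_∞/(y;q)_∞`, the ratio of the two convergent infinite products (the denominator
being nonzero). -/
theorem q_binomial_sum (q y x : ℂ) (hq : ‖q‖ < 1) (hy : ‖y‖ < 1) :
    Multipliable (fun i : ℕ => 1 - y * x * q ^ i) ∧
    Multipliable (fun i : ℕ => 1 - y * q ^ i) ∧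
    (∏' i : ℕ, (1 - y * q ^ i)) ≠ 0 ∧
    HasSum (fun j : ℕ => y ^ j / qPoch q q j * qPoch x q j)
      ((∏' i : ℕ, (1 - y * x * q ^ i)) / ∏' i : ℕ, (1 - y * q ^ i)) := by
  have hden : ∏' i : ℕ, (1 - y * q ^ i) ≠ 0 :=
    tprod_one_sub_mul_pow_ne_zero hq (one_sub_mul_pow_ne_zero hy hq.le)
  refine ⟨multipliable_one_sub_mul_pow _ hq, multipliable_one_sub_mul_pow _ hq, hden, ?_⟩
  have hprod :
      qBinomialSeries x q y * ∏' i : ℕ, (1 - y * q ^ i) = ∏' i : ℕ, (1 - y * x * q ^ i) := by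
    refine tendsto_nhds_unique ((tendsto_qPoch y hq).const_mul _) ?_
    simpa [qBinomialSeries_mul_qPoch hq hy] using
      (tendsto_qBinomialSeries_pow_mul x hq hy).mul (tendsto_qPoch (y * x) hq)
  rw [← hprod, mul_div_cancel_right₀ _ hden]
  refine (summable_qBinomialSeries x hq hy).hasSum.congr_fun fun j => ?_
  rw [qBinomialSeriesCoeff]
  ring
end

section
/- Let L_n(x) = ∑_{k=0}^{n} C(n,k)·(−x)^k/k! denote the n-th Laguerre polynomial, and define the polynomials 𝓛_n by 𝓛_0(x) = 1, 𝓛_1(x) = x − 1, and 𝓛_n(x) = ∑_{j=2}^{n} C(n−2, j−2)·x^j/j! for n ≥ 2. Then for every x ∈ ℂ and every integer n ≥ 1, ∑_{k=0}^{n} L_{n−k}(x) · 𝓛_k(x) = 0; equivalently the infinite lower triangular matrices with (n,j) entries L_{n−j}(x) and 𝓛_{n−j}(x) respectively are mutually inverse. -/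
/-!
The generating functions are `∑ L_n(x) tⁿ = (1 - t)⁻¹ exp(-x t/(1 - t))` and
`∑ 𝓛_n(x) tⁿ = (1 - t) exp(x t/(1 - t))`, so their product is `exp 0 = 1`. As formal power
series both are obtained by substituting `t/(1 - t) = X * mk 1`, which has no constant term, into
an exponential series: the coefficient of `tⁿ` of such a substitution involves only the first
`n + 1` terms, and `(1 - t)⁻¹ (t/(1 - t))^d` has coefficients `C(n, d)`.
-/

open Finset

/-- The `n`-th Laguerre polynomial `L_n(x) = ∑_{k=0}^n C(n,k) (-x)^k/k!`, as a function
on `ℂ`. -/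
noncomputable def laguerre (n : ℕ) (x : ℂ) : ℂ :=
  ∑ k ∈ Finset.range (n + 1), (n.choose k : ℂ) * (-x) ^ k / (k.factorial : ℂ)

/-- The polynomials `𝓛_n`: `𝓛_0(x) = 1`, `𝓛_1(x) = x - 1`, and
`𝓛_n(x) = ∑_{j=2}^n C(n-2,j-2) x^j/j!` for `n ≥ 2`. -/
noncomputable def laguerreInv : ℕ → ℂ → ℂ
  | 0, _ => 1
  | 1, x => x - 1
  | (n + 2), x =>
      ∑ j ∈ Finset.Icc 2 (n + 2), (n.choose (j - 2) : ℂ) * x ^ j / (j.factorial : ℂ)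

open PowerSeries

section
variable {R : Type*} [CommRing R]

lemma PowerSeries.coeff_mul_subst {a : R⟦X⟧} (ha : constantCoeff a = 0) (g f : R⟦X⟧)
    (n : ℕ) :
    coeff n (g * f.subst a) = ∑ d ∈ range (n + 1), coeff d f * coeff n (g * a ^ d) := by
  have hs : HasSubst a := HasSubst.of_constantCoeff_zero' ha
  obtain ⟨b, rfl⟩ : X ∣ a := X_dvd_iff.mpr ha
  have htail : ∀ q : R⟦X⟧, coeff n (g * ((X * b) ^ (n + 1) * q)) = 0 := by
    intro q
    rw [mul_pow, mul_left_comm, mul_assoc, coeff_X_pow_mul', if_neg (by omega)]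
  conv_lhs => rw [eq_X_pow_mul_shift_add_trunc (n + 1) f, subst_add hs, subst_mul hs, subst_pow hs,
    subst_X hs, subst_coe hs, Polynomial.aeval_eq_sum_range' (natDegree_trunc_lt f n)]
  rw [mul_add, map_add, htail, zero_add, mul_sum, map_sum]
  refine sum_congr rfl fun d hd => ?_
  rw [coeff_trunc, if_pos (mem_range.mp hd), mul_smul_comm, LinearMap.map_smul, smul_eq_mul]

lemma PowerSeries.coeff_mk_one_mul_X_mul_mk_one_pow (n d : ℕ) :
    coeff n (mk 1 * (X * mk 1) ^ d : R⟦X⟧) = n.choose d := by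
  rw [mul_pow, mul_left_comm, ← pow_succ', mk_one_pow_eq_mk_choose_add, coeff_X_pow_mul']
  split_ifs with h
  · rw [coeff_mk, Nat.add_sub_cancel' h]
  · rw [Nat.choose_eq_zero_of_lt (not_le.mp h), Nat.cast_zero]

lemma PowerSeries.one_sub_X_mul_X_mul_mk_one_pow_succ (d : ℕ) :
    (1 - X) * (X * mk 1) ^ (d + 1) = (X ^ (d + 1) * mk 1 ^ d : R⟦X⟧) := by
  calc (1 - X) * (X * mk 1) ^ (d + 1) = X ^ (d + 1) * mk 1 ^ d * (mk 1 * (1 - X) : R⟦X⟧) := by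
        ring
    _ = X ^ (d + 1) * mk 1 ^ d := by rw [mk_one_mul_one_sub_eq_one, mul_one]

lemma PowerSeries.hasSubst_X_mul_mk_one : HasSubst (X * mk 1 : R⟦X⟧) :=
  HasSubst.of_constantCoeff_zero' (by simp)

end

noncomputable def laguerreSeries (x : ℂ) : ℂ⟦X⟧ := PowerSeries.mk (laguerre · x)

noncomputable def laguerreInvSeries (x : ℂ) : ℂ⟦X⟧ := PowerSeries.mk (laguerreInv · x)

lemma laguerreSeries_eq (x : ℂ) :
    laguerreSeries x =
      PowerSeries.mk 1 * (rescale (-x) (exp ℂ)).subst (X * PowerSeries.mk 1 : ℂ⟦X⟧) := by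
  ext n
  rw [laguerreSeries, coeff_mk, coeff_mul_subst (by simp), laguerre]
  refine sum_congr rfl fun d _ => ?_
  rw [coeff_mk_one_mul_X_mul_mk_one_pow, coeff_rescale, coeff_exp, one_div, map_inv₀, map_natCast]
  ring

lemma laguerreInvSeries_eq (x : ℂ) :
    laguerreInvSeries x =
      (1 - X) * (rescale x (exp ℂ)).subst (X * PowerSeries.mk 1 : ℂ⟦X⟧) := by
  ext n
  rw [laguerreInvSeries, coeff_mk, coeff_mul_subst (by simp)]
  rcases n with _ | _ | m
  · simp [laguerreInv]
  · have h : (1 - X) * (X * PowerSeries.mk 1) = (X : ℂ⟦X⟧) := by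
      simpa using one_sub_X_mul_X_mul_mk_one_pow_succ (R := ℂ) 0
    rw [sum_range_succ, sum_range_one, pow_zero, mul_one, pow_one, h]
    simp [laguerreInv, sub_eq_neg_add]
  · have hX : coeff (m + 2) (X : ℂ⟦X⟧) = 0 := by simp [coeff_X]
    rw [sum_range_succ', sum_range_succ', pow_zero, mul_one, map_sub, coeff_one, hX,
      one_sub_X_mul_X_mul_mk_one_pow_succ, pow_zero, mul_one, pow_one, hX, laguerreInv,
      ← Ico_add_one_right_eq_Icc, sum_Ico_eq_sum_range, show m + 2 + 1 - 2 = m + 1 by omega]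
    simp only [if_neg (Nat.succ_ne_zero _), sub_zero, mul_zero, add_zero]
    refine sum_congr rfl fun f hf => ?_
    have hfm : f ≤ m := Nat.lt_succ_iff.mp (mem_range.mp hf)
    rw [one_sub_X_mul_X_mul_mk_one_pow_succ, coeff_X_pow_mul', if_pos (by omega),
      mk_one_pow_eq_mk_choose_add, coeff_mk, coeff_rescale, coeff_exp,
      show f + (m + 2 - (f + 1 + 1)) = m by omega, add_comm 2 f, Nat.add_sub_cancel, one_div,
      map_inv₀, map_natCast]
    ring

lemma laguerreSeries_mul_laguerreInvSeries (x : ℂ) :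
    laguerreSeries x * laguerreInvSeries x = 1 := by
  have hs : HasSubst (X * PowerSeries.mk 1 : ℂ⟦X⟧) := hasSubst_X_mul_mk_one
  calc laguerreSeries x * laguerreInvSeries x
      = PowerSeries.mk 1 * (1 - X) * (rescale (-x) (exp ℂ) * rescale x (exp ℂ)).subst
          (X * PowerSeries.mk 1 : ℂ⟦X⟧) := by
        rw [laguerreSeries_eq, laguerreInvSeries_eq, subst_mul hs]
        ring
    _ = 1 := by
      rw [mk_one_mul_one_sub_eq_one, one_mul, exp_mul_exp_eq_exp_add, neg_add_cancel,
        rescale_zero, RingHom.comp_apply, constantCoeff_exp, map_one, ← coe_substAlgHom hs,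
        map_one]

lemma sum_range_laguerre_mul_laguerreInv (x : ℂ) (n : ℕ) :
    ∑ k ∈ range (n + 1), laguerre (n - k) x * laguerreInv k x = if n = 0 then 1 else 0 := by
  have h := congrArg (coeff n) (laguerreSeries_mul_laguerreInvSeries x)
  rw [mul_comm, coeff_mul, Nat.sum_antidiagonal_eq_sum_range_succ
    (fun i j => coeff i (laguerreInvSeries x) * coeff j (laguerreSeries x)), coeff_one] at h
  simpa only [laguerreSeries, laguerreInvSeries, coeff_mk, mul_comm] using h

/-- For every `x ∈ ℂ` and `n ≥ 1`, `∑_{k=0}^{n} L_{n-k}(x) 𝓛_k(x) = 0`; equivalently,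
the lower triangular matrices with entries `L_{n-j}(x)` and `𝓛_{n-j}(x)` are mutually
inverse. -/
theorem laguerre_inverse (x : ℂ) :
    (∀ n : ℕ, 1 ≤ n →
      ∑ k ∈ Finset.range (n + 1), laguerre (n - k) x * laguerreInv k x = 0) ∧
    (∀ n j : ℕ, j ≤ n →
      ∑ k ∈ Finset.Icc j n, laguerre (n - k) x * laguerreInv (k - j) x =
        if n = j then 1 else 0) := by
  refine ⟨fun n hn => ?_, fun n j hjn => ?_⟩
  · rw [sum_range_laguerre_mul_laguerreInv, if_neg (by omega)]
  · rw [← Ico_add_one_right_eq_Icc, sum_Ico_eq_sum_range, show n + 1 - j = n - j + 1 by omega]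
    convert sum_range_laguerre_mul_laguerreInv x (n - j) using 2 with k
    · rw [Nat.sub_sub, Nat.add_sub_cancel_left]
    · omega
end
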